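/- arXiv:2101.00441 — 2 statements merged into one kernel-verified Lean document; each statement's English description precedes it below -/
import Mathlib

section
/- At most ⌊n⌋ axis-aligned unit cubes with pairwise disjoint interiors fit inside the box [0,1+ε]×[0,1+ε]×[0,n] when 0 ≤ ε < 1; equivalently, the maximum number of unit cubes packable into this box equals ⌊n⌋ for n a positive integer. -/
def unitCube (x : Fin 3 → ℝ) : Set (Fin 3 → ℝ) :=
  {p | ∀ k, x k ≤ p k ∧ p k ≤ x k + 1}

def unitCubeInt (x : Fin 3 → ℝ) : Set (Fin 3 → ℝ) :=
  {p | ∀ k, x k < p k ∧ p k < x k + 1}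

/-- A packing of `m` unit cubes into `[0,1+ε] × [0,1+ε] × [0,n]`. -/
def UnitCubePacking (n m : ℕ) (ε : ℝ) (pos : Fin m → (Fin 3 → ℝ)) : Prop :=
  (∀ i, unitCube (pos i) ⊆ {p | (0 ≤ p 0 ∧ p 0 ≤ 1 + ε) ∧ (0 ≤ p 1 ∧ p 1 ≤ 1 + ε) ∧
                                 (0 ≤ p 2 ∧ p 2 ≤ (n : ℝ))}) ∧
  (∀ i j, i ≠ j → Disjoint (unitCubeInt (pos i)) (unitCubeInt (pos j)))

/-!
Since `ε < 1`, the bottom corners of any two cubes lie within distance `1` of each other in both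
horizontal coordinates, so two cubes whose heights have the same integer part would have
overlapping interiors. Hence `i ↦ ⌊height of cube i⌋₊` is an injection into `{0, …, n - 1}`.
A vertical stack of `n` cubes shows that `n` is attained.
-/

open Set

lemma mem_unitCube_self (x : Fin 3 → ℝ) : x ∈ unitCube x :=
  fun _ => ⟨le_rfl, by linarith⟩

lemma add_one_mem_unitCube (x : Fin 3 → ℝ) : x + 1 ∈ unitCube x :=
  fun _ => ⟨by simp, le_rfl⟩

lemma disjoint_unitCubeInt_of_add_one_le {x y : Fin 3 → ℝ} (k : Fin 3) (h : x k + 1 ≤ y k) :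
    Disjoint (unitCubeInt x) (unitCubeInt y) :=
  disjoint_left.2 fun _ hx hy => by linarith [(hx k).2, (hy k).1]

lemma unitCubeInt_inter_nonempty_of_abs_sub_lt {x y : Fin 3 → ℝ} (h : ∀ k, |x k - y k| < 1) :
    (unitCubeInt x ∩ unitCubeInt y).Nonempty := by
  refine ⟨fun k => (x k + y k + 1) / 2, fun k => ?_, fun k => ?_⟩ <;>
  · have := abs_lt.1 (h k)
    constructor <;> linarith

namespace UnitCubePacking

variable {n m : ℕ} {ε : ℝ} {pos : Fin m → Fin 3 → ℝ}

lemma coord_bounds (h : UnitCubePacking n m ε pos) (i : Fin m) :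
    (0 ≤ pos i 0 ∧ pos i 0 ≤ ε) ∧ (0 ≤ pos i 1 ∧ pos i 1 ≤ ε) ∧
      (0 ≤ pos i 2 ∧ pos i 2 + 1 ≤ n) := by
  have lo := h.1 i (mem_unitCube_self (pos i))
  have hi := h.1 i (add_one_mem_unitCube (pos i))
  simp only [mem_ofPred_eq, Pi.add_apply, Pi.one_apply] at lo hi
  refine ⟨⟨lo.1.1, ?_⟩, ⟨lo.2.1.1, ?_⟩, ⟨lo.2.2.1, hi.2.2.2⟩⟩ <;> linarith

lemma eq_of_abs_sub_lt (h : UnitCubePacking n m ε pos) {i j : Fin m}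
    (hij : ∀ k, |pos i k - pos j k| < 1) : i = j := by
  by_contra hne
  exact not_disjoint_iff_nonempty_inter.2 (unitCubeInt_inter_nonempty_of_abs_sub_lt hij)
    (h.2 i j hne)

lemma floor_height_injective (h : UnitCubePacking n m ε pos) (hε : ε < 1) :
    Function.Injective fun i => ⌊pos i 2⌋₊ := by
  intro i j hij
  obtain ⟨⟨hi0, hi0'⟩, ⟨hi1, hi1'⟩, hi2, -⟩ := h.coord_bounds i
  obtain ⟨⟨hj0, hj0'⟩, ⟨hj1, hj1'⟩, hj2, -⟩ := h.coord_bounds j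
  have h_floor : ⌊pos i 2⌋ = ⌊pos j 2⌋ := by
    rw [← Int.natCast_floor_eq_floor hi2, ← Int.natCast_floor_eq_floor hj2]
    exact congrArg Nat.cast hij
  refine h.eq_of_abs_sub_lt fun k => ?_
  match k with
  | 0 => exact abs_sub_lt_of_nonneg_of_lt hi0 (by linarith) hj0 (by linarith)
  | 1 => exact abs_sub_lt_of_nonneg_of_lt hi1 (by linarith) hj1 (by linarith)
  | 2 => exact Int.abs_sub_lt_one_of_floor_eq_floor h_floor

lemma floor_height_lt (h : UnitCubePacking n m ε pos) (i : Fin m) : ⌊pos i 2⌋₊ < n := by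
  obtain ⟨-, -, h0, h1⟩ := h.coord_bounds i
  exact (Nat.floor_lt h0).2 (by linarith)

lemma card_le (h : UnitCubePacking n m ε pos) (hε : ε < 1) : m ≤ n := by
  simpa using Fintype.card_le_of_injective (fun i => (⟨_, h.floor_height_lt i⟩ : Fin n))
    fun i j hij => h.floor_height_injective hε (Fin.mk.inj_iff.1 hij)

end UnitCubePacking

def verticalStack (n : ℕ) : Fin n → Fin 3 → ℝ :=
  fun i => ![0, 0, i]

lemma disjoint_unitCubeInt_verticalStack {n : ℕ} {i j : Fin n} (hij : i < j) :
    Disjoint (unitCubeInt (verticalStack n i)) (unitCubeInt (verticalStack n j)) := by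
  refine disjoint_unitCubeInt_of_add_one_le 2 ?_
  simpa [verticalStack] using (Nat.cast_le (α := ℝ)).2 (Fin.lt_def.1 hij)

lemma unitCubePacking_verticalStack (n : ℕ) {ε : ℝ} (hε : 0 ≤ ε) :
    UnitCubePacking n n ε (verticalStack n) := by
  refine ⟨fun i p hp => ?_, fun i j hij => ?_⟩
  · have hi : (i : ℝ) + 1 ≤ n := by exact_mod_cast i.isLt
    have h0 := hp 0
    have h1 := hp 1
    have h2 := hp 2
    simp only [verticalStack, Matrix.cons_val_zero, Matrix.cons_val_one,
      Matrix.cons_val_two, Matrix.head_cons, Matrix.tail_cons] at h0 h1 h2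
    refine ⟨⟨h0.1, ?_⟩, ⟨h1.1, ?_⟩, ⟨?_, ?_⟩⟩ <;> linarith [(i.val.cast_nonneg : (0 : ℝ) ≤ i)]
  · rcases hij.lt_or_gt with hlt | hlt
    exacts [disjoint_unitCubeInt_verticalStack hlt, (disjoint_unitCubeInt_verticalStack hlt).symm]

theorem max_unit_cubes_in_tall_box_general (n : ℕ) (ε : ℝ) (hε0 : 0 ≤ ε) (hε1 : ε < 1) :
    (∃ pos : Fin n → (Fin 3 → ℝ), UnitCubePacking n n ε pos) ∧
    (∀ m : ℕ, ∀ pos : Fin m → (Fin 3 → ℝ), UnitCubePacking n m ε pos → m ≤ n) :=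
  ⟨⟨verticalStack n, unitCubePacking_verticalStack n hε0⟩,
    fun _ _ h => h.card_le hε1⟩

/-- Exactly `n` unit cubes is the maximum number packable into
`[0,1+ε] × [0,1+ε] × [0,n]` for `0 ≤ ε < 1` and `n` a positive integer. -/
theorem max_unit_cubes_in_tall_box (n : ℕ) (hn : 0 < n) (ε : ℝ) (hε0 : 0 ≤ ε) (hε1 : ε < 1) :
    (∃ pos : Fin n → (Fin 3 → ℝ), UnitCubePacking n n ε pos) ∧
    (∀ m : ℕ, ∀ pos : Fin m → (Fin 3 → ℝ), UnitCubePacking n m ε pos → m ≤ n) :=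
  max_unit_cubes_in_tall_box_general n ε hε0 hε1
end

section
/- In any interior-disjoint axis-aligned packing, one can normalize so every box is 'anchored': each box either touches the container wall at coordinate 0 on an axis or touches the face of another box along that axis; this normalization does not decrease the set of packed boxes. -/
def boxInt (x a : Fin 3 → ℝ) : Set (Fin 3 → ℝ) :=
  {p | ∀ k, x k < p k ∧ p k < x k + a k}

def PackingFeasible (m : ℕ) (D : Fin 3 → ℝ) (pos len : Fin m → (Fin 3 → ℝ)) : Prop :=
  (∀ i k, 0 ≤ pos i k ∧ pos i k + len i k ≤ D k) ∧
  (∀ i j, i ≠ j → Disjoint (boxInt (pos i) (len i)) (boxInt (pos j) (len j)))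

/-- Box `i` is anchored along axis `H`: it touches the wall at coordinate 0,
or it touches the upper face of another box whose projections on the other
two axes overlap its own. -/
def Anchored (m : ℕ) (pos len : Fin m → (Fin 3 → ℝ)) (i : Fin m) (H : Fin 3) : Prop :=
  pos i H = 0 ∨ ∃ j, j ≠ i ∧ pos j H + len j H = pos i H ∧
    ∀ k, k ≠ H → pos i k < pos j k + len j k ∧ pos j k < pos i k + len i k

/-!
Among all packings of the same boxes whose coordinates are bounded above by the given ones,
take one minimising the sum of all coordinates; it exists because this set of packings is
compact. If some box were not anchored along an axis `H`, it could slide down along `H`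
until it meets the highest face below it of a box whose projections overlap its own (or the
wall `0`): the result is still a packing, with a smaller coordinate sum.
-/

open Function Set

section Boxes

variable {x a y b : Fin 3 → ℝ}

def BoxSeparated (x a y b : Fin 3 → ℝ) : Prop :=
  ∃ k, x k + a k ≤ y k ∨ y k + b k ≤ x k

def ProjOverlap (H : Fin 3) (x a y b : Fin 3 → ℝ) : Prop :=
  ∀ k, k ≠ H → x k < y k + b k ∧ y k < x k + a k

theorem BoxSeparated.symm (h : BoxSeparated x a y b) : BoxSeparated y b x a :=
  h.imp fun _ => Or.symm

theorem boxInt_eq_pi (x a : Fin 3 → ℝ) : boxInt x a = univ.pi fun k => Ioo (x k) (x k + a k) := by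
  ext p
  simp [boxInt]

theorem disjoint_boxInt_iff (ha : ∀ k, 0 < a k) (hb : ∀ k, 0 < b k) :
    Disjoint (boxInt x a) (boxInt y b) ↔ BoxSeparated x a y b := by
  simp only [boxInt_eq_pi, disjoint_univ_pi, Ioo_disjoint_Ioo, BoxSeparated]
  refine exists_congr fun k => ?_
  have := ha k
  have := hb k
  grind

theorem BoxSeparated.update_of_le {H : Fin 3} {s : ℝ} (h : BoxSeparated x a y b) (hs : s ≤ x H)
    (hblock : ProjOverlap H x a y b → y H + b H ≤ x H → y H + b H ≤ s) :
    BoxSeparated (update x H s) a y b := by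
  by_cases hover : ProjOverlap H x a y b
  · obtain ⟨k, hk⟩ := h
    obtain rfl : k = H := by
      by_contra hkH
      have := hover k hkH
      grind
    refine ⟨k, ?_⟩
    simp only [update_self]
    grind
  · obtain ⟨k, hkH, hk⟩ : ∃ k, k ≠ H ∧ ¬(x k < y k + b k ∧ y k < x k + a k) := by
      simpa [ProjOverlap] using hover
    refine ⟨k, ?_⟩
    rw [update_of_ne hkH]
    grind

end Boxes

section Packings

variable {m : ℕ} {D : Fin 3 → ℝ} {len q : Fin m → Fin 3 → ℝ}

def SeparatedPacking (m : ℕ) (D : Fin 3 → ℝ) (len q : Fin m → Fin 3 → ℝ) : Prop :=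
  (∀ i k, 0 ≤ q i k ∧ q i k + len i k ≤ D k) ∧
    ∀ i j, i ≠ j → BoxSeparated (q i) (len i) (q j) (len j)

theorem packingFeasible_iff_separatedPacking (hlen : ∀ i k, 0 < len i k) :
    PackingFeasible m D q len ↔ SeparatedPacking m D len q := by
  simp only [PackingFeasible, SeparatedPacking, disjoint_boxInt_iff (hlen _) (hlen _)]

theorem isClosed_setOf_separatedPacking : IsClosed {q | SeparatedPacking m D len q} := by
  have hcoord (i : Fin m) (k : Fin 3) : Continuous fun q : Fin m → Fin 3 → ℝ => q i k := by
    fun_prop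
  simp only [SeparatedPacking, BoxSeparated, ofPred_and, ofPred_forall, ofPred_exists, ofPred_or]
  refine .inter (isClosed_iInter fun i => isClosed_iInter fun k => .inter ?_ ?_)
    (isClosed_iInter fun i => isClosed_iInter fun j => isClosed_iInter fun _ =>
      isClosed_iUnion_of_finite fun k => .union ?_ ?_)
  · exact isClosed_le continuous_const (hcoord i k)
  · exact isClosed_le ((hcoord i k).add continuous_const) continuous_const
  · exact isClosed_le ((hcoord i k).add continuous_const) (hcoord j k)
  · exact isClosed_le ((hcoord j k).add continuous_const) (hcoord i k)

theorem SeparatedPacking.update {i : Fin m} {H : Fin 3} {s : ℝ} (hq : SeparatedPacking m D len q)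
    (hs₀ : 0 ≤ s) (hs : s ≤ q i H)
    (hblock : ∀ j, j ≠ i → ProjOverlap H (q i) (len i) (q j) (len j) →
      q j H + len j H ≤ q i H → q j H + len j H ≤ s) :
    SeparatedPacking m D len (Function.update q i (Function.update (q i) H s)) := by
  obtain ⟨hbound, hsep⟩ := hq
  have hmoved (j) (hj : j ≠ i) : BoxSeparated (Function.update (q i) H s) (len i) (q j) (len j) :=
    (hsep i j hj.symm).update_of_le hs (hblock j hj)
  refine ⟨fun j k => ?_, fun j j' hjj' => ?_⟩
  · rcases eq_or_ne j i with rfl | hj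
    · rcases eq_or_ne k H with rfl | hk
      · simp only [update_self]
        exact ⟨hs₀, by linarith [hbound j k]⟩
      · simpa [update_of_ne hk] using hbound j k
    · simpa [update_of_ne hj] using hbound j k
  · rcases eq_or_ne j i with rfl | hj
    · simpa [update_of_ne hjj'.symm] using hmoved j' hjj'.symm
    rcases eq_or_ne j' i with rfl | hj'
    · simpa [update_of_ne hj] using (hmoved j hj).symm
    · simpa [update_of_ne hj, update_of_ne hj'] using hsep j j' hjj'

theorem exists_slide_of_not_anchored {i : Fin m} {H : Fin 3} (hq : 0 ≤ q i H)
    (hA : ¬Anchored m q len i H) :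
    ∃ s, 0 ≤ s ∧ s < q i H ∧ ∀ j, j ≠ i → ProjOverlap H (q i) (len i) (q j) (len j) →
      q j H + len j H ≤ q i H → q j H + len j H ≤ s := by
  classical
  simp only [Anchored, not_or, not_exists, not_and] at hA
  obtain ⟨hA₀, hAface⟩ := hA
  let tops : Finset ℝ := insert 0 <| (Finset.univ.filter fun j => j ≠ i ∧
    ProjOverlap H (q i) (len i) (q j) (len j) ∧ q j H + len j H ≤ q i H).image
      fun j => q j H + len j H
  refine ⟨tops.max' (Finset.insert_nonempty _ _), tops.le_max' _ (Finset.mem_insert_self _ _),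
    ?_, fun j hj hover hle => tops.le_max' _ ?_⟩
  · refine (Finset.max'_lt_iff _ _).2 fun t ht => ?_
    simp only [tops, Finset.mem_insert, Finset.mem_image, Finset.mem_filter] at ht
    obtain rfl | ⟨j, ⟨-, hj, hover, hle⟩, rfl⟩ := ht
    · exact lt_of_le_of_ne hq (Ne.symm hA₀)
    · exact lt_of_le_of_ne hle (hAface j hj · hover)
  · simp only [tops, Finset.mem_insert, Finset.mem_image, Finset.mem_filter]
    exact .inr ⟨j, ⟨Finset.mem_univ _, hj, hover, hle⟩, rfl⟩

end Packings

theorem strictMono_sum_sum {ι κ M : Type*} [Fintype ι] [Fintype κ] [AddCommMonoid M]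
    [PartialOrder M] [IsOrderedCancelAddMonoid M] :
    StrictMono fun q : ι → κ → M => ∑ i, ∑ k, q i k := by
  refine Fintype.sum_strictMono.comp fun q q' hlt => ?_
  obtain ⟨hle, i, hi⟩ := Pi.lt_def.1 hlt
  exact Pi.lt_def.2 ⟨fun j => Fintype.sum_mono (hle j), i, Fintype.sum_strictMono hi⟩

theorem packing_normalization_general (m : ℕ) (D : Fin 3 → ℝ)
    (pos len : Fin m → (Fin 3 → ℝ)) (hlen : ∀ i k, 0 < len i k)
    (hfeas : PackingFeasible m D pos len) :
    ∃ pos' : Fin m → (Fin 3 → ℝ), PackingFeasible m D pos' len ∧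
      (∀ i k, pos' i k ≤ pos i k) ∧
      ∀ i H, Anchored m pos' len i H := by
  let K := {q | SeparatedPacking m D len q} ∩ Iic pos
  have hK : IsCompact K :=
    isCompact_Icc.of_isClosed_subset (isClosed_setOf_separatedPacking.inter isClosed_Iic)
      fun q hq => ⟨fun i k => (hq.1.1 i k).1, hq.2⟩
  have hpos : pos ∈ K := ⟨(packingFeasible_iff_separatedPacking hlen).1 hfeas, self_mem_Iic⟩
  obtain ⟨q, ⟨hq, hqle⟩, hmin⟩ :=
    hK.exists_isMinOn ⟨pos, hpos⟩ (f := fun q => ∑ i, ∑ k, q i k) (by fun_prop)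
  refine ⟨q, (packingFeasible_iff_separatedPacking hlen).2 hq, hqle,
    fun i H => by_contra fun hA => ?_⟩
  obtain ⟨s, hs₀, hslt, hblock⟩ := exists_slide_of_not_anchored (hq.1 i H).1 hA
  have hlt : Function.update q i (Function.update (q i) H s) < q :=
    update_lt_self_iff.2 (update_lt_self_iff.2 hslt)
  exact (hmin ⟨hq.update hs₀ hslt.le hblock, hlt.le.trans hqle⟩).not_gt (strictMono_sum_sum hlt)

/-- Normalization: every interior-disjoint packing can be transformed into a
packing of the same boxes (coordinates only decreased) in which every box is
anchored along every axis. -/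
theorem packing_normalization (m : ℕ) (D : Fin 3 → ℝ) (hD : ∀ k, 0 < D k)
    (pos len : Fin m → (Fin 3 → ℝ)) (hlen : ∀ i k, 0 < len i k)
    (hfeas : PackingFeasible m D pos len) :
    ∃ pos' : Fin m → (Fin 3 → ℝ), PackingFeasible m D pos' len ∧
      (∀ i k, pos' i k ≤ pos i k) ∧
      ∀ i H, Anchored m pos' len i H :=
  packing_normalization_general m D pos len hlen hfeas
end
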